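/- arXiv:1709.09738 — 3 statements merged into one kernel-verified Lean document; each statement's English description precedes it below -/
import Mathlib

section
/- Let B, C ⊆ ℝ^d be convex bodies of equal volume V > 0 such that vol(t₁·C + t₂·B) ≤ c^d (t₁ + t₂)^d V for all t₁, t₂ > 0, where c ≥ 1. Then there exists a finite set Y ⊆ ℤ^d with |Y| ≤ (3c)^d such that C ∩ ℤ^d ⊆ Y + (B ∩ ℤ^d). -/
/-!
Choose `Y ⊆ C ∩ ℤ^d` greedily so that differences of distinct points of `Y` avoid `B`, while every
lattice point `x` of `C` has some `y ∈ Y` with `x - y ∈ B` (a point added to `Y` covers itself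
because `0 ∈ B`). As `B` is convex and symmetric, the translates `y + B/2`, `y ∈ Y`, are pairwise
disjoint; they lie in `C + B/2`, so `|Y| 2^{-d} V ≤ vol (C + B/2) ≤ c^d (3/2)^d V`.
-/

open MeasureTheory
open scoped Pointwise ENNReal

/-- The integer lattice points in `ℝ^d`. -/
def intLattice (d : ℕ) : Set (EuclideanSpace ℝ (Fin d)) :=
  {x | ∀ i, ∃ n : ℤ, x i = n}

lemma sub_mem_intLattice {d : ℕ} {x y : EuclideanSpace ℝ (Fin d)}
    (hx : x ∈ intLattice d) (hy : y ∈ intLattice d) : x - y ∈ intLattice d := by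
  intro i
  obtain ⟨m, hm⟩ := hx i
  obtain ⟨n, hn⟩ := hy i
  exact ⟨m - n, by simp [hm, hn]⟩

lemma intLattice_subset_span_basisFun (d : ℕ) :
    intLattice d ⊆ Submodule.span ℤ (Set.range (EuclideanSpace.basisFun (Fin d) ℝ).toBasis) := by
  intro x hx
  rw [SetLike.mem_coe, Module.Basis.mem_span_iff_repr_mem]
  intro i
  obtain ⟨n, hn⟩ := hx i
  exact ⟨n, by simp [hn]⟩

lemma Bornology.IsBounded.finite_inter_intLattice {d : ℕ} {s : Set (EuclideanSpace ℝ (Fin d))}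
    (hs : Bornology.IsBounded s) : (s ∩ intLattice d).Finite :=
  (ZSpan.setFinite_inter _ hs).subset
    (Set.inter_subset_inter_right s (intLattice_subset_span_basisFun d))

section ConvexSymmetric

variable {E : Type*} [AddCommGroup E] [Module ℝ E] {B : Set E}

lemma Convex.half_smul_sub_half_smul_mem (hB : Convex ℝ B) (hsymm : -B = B) {u v : E}
    (hu : u ∈ B) (hv : v ∈ B) : (2 : ℝ)⁻¹ • u - (2 : ℝ)⁻¹ • v ∈ B := by
  have hnv : -v ∈ B := hsymm ▸ Set.neg_mem_neg.mpr hv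
  rw [sub_eq_add_neg, ← smul_neg]
  exact hB hu hnv (by norm_num) (by norm_num) (by norm_num)

lemma Convex.zero_mem_of_neg_eq (hB : Convex ℝ B) (hsymm : -B = B) (hne : B.Nonempty) :
    (0 : E) ∈ B := by
  obtain ⟨u, hu⟩ := hne
  simpa using hB.half_smul_sub_half_smul_mem hsymm hu hu

lemma Convex.disjoint_vadd_half_smul (hB : Convex ℝ B) (hsymm : -B = B) {x y : E}
    (hxy : x - y ∉ B) : Disjoint (x +ᵥ (2 : ℝ)⁻¹ • B) (y +ᵥ (2 : ℝ)⁻¹ • B) := by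
  rw [Set.disjoint_left]
  rintro _ ⟨_, ⟨u, hu, rfl⟩, rfl⟩ ⟨_, ⟨v, hv, rfl⟩, hvu⟩
  refine hxy ?_
  have : x - y = (2 : ℝ)⁻¹ • v - (2 : ℝ)⁻¹ • u := by
    simp only [vadd_eq_add] at hvu
    rw [sub_eq_sub_iff_add_eq_add, ← hvu, add_comm]
  exact this ▸ hB.half_smul_sub_half_smul_mem hsymm hv hu

end ConvexSymmetric

lemma Finset.exists_separated_subset_covering {G : Type*} [AddCommGroup G] [DecidableEq G]
    (S : Finset G) {B : Set G} (h0 : (0 : G) ∈ B) (hsymm : -B = B) :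
    ∃ Y ⊆ S, (Y : Set G).Pairwise (fun y y' => y - y' ∉ B) ∧ ∀ x ∈ S, ∃ y ∈ Y, x - y ∈ B := by
  induction S using Finset.induction_on with
  | empty => exact ⟨∅, subset_rfl, by simp, by simp⟩
  | insert a S _ ih =>
    obtain ⟨Y, hYS, hYsep, hYcov⟩ := ih
    by_cases ha : ∃ y ∈ Y, a - y ∈ B
    · refine ⟨Y, hYS.trans (Finset.subset_insert a S), hYsep, ?_⟩
      simpa [Finset.forall_mem_insert] using ⟨ha, hYcov⟩
    · push Not at ha
      refine ⟨insert a Y, Finset.insert_subset_insert a hYS, ?_, ?_⟩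
      · rw [Finset.coe_insert, Set.pairwise_insert]
        refine ⟨hYsep, fun y hy _ => ⟨ha y hy, fun h => ha y hy ?_⟩⟩
        rw [← neg_sub, ← hsymm]
        exact Set.neg_mem_neg.mpr h
      · rw [Finset.forall_mem_insert]
        exact ⟨⟨a, Finset.mem_insert_self a Y, by simpa using h0⟩,
          fun x hx => (hYcov x hx).imp fun y ⟨hy, hxy⟩ => ⟨Finset.mem_insert_of_mem hy, hxy⟩⟩

lemma card_mul_addHaar_half_smul_eq {E : Type*} [NormedAddCommGroup E] [NormedSpace ℝ E]
    [MeasurableSpace E] [BorelSpace E] [FiniteDimensional ℝ E] (μ : Measure E)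
    [μ.IsAddHaarMeasure] {B : Set E} (hB : Convex ℝ B) (hsymm : -B = B) {s : Finset E}
    (hs : (s : Set E).Pairwise fun y y' => y - y' ∉ B) :
    s.card * μ ((2 : ℝ)⁻¹ • B) = μ (s + (2 : ℝ)⁻¹ • B) := by
  have hdisj : (s : Set E).PairwiseDisjoint fun y => y +ᵥ (2 : ℝ)⁻¹ • B :=
    fun x hx y hy hxy => hB.disjoint_vadd_half_smul hsymm (hs hx hy hxy)
  have hmeas : ∀ y ∈ s, NullMeasurableSet (y +ᵥ (2 : ℝ)⁻¹ • B) μ :=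
    fun y _ => ((hB.smul _).vadd y).nullMeasurableSet μ
  calc s.card * μ ((2 : ℝ)⁻¹ • B) = ∑ y ∈ s, μ (y +ᵥ (2 : ℝ)⁻¹ • B) := by
        simp [measure_vadd]
    _ = μ (⋃ y ∈ s, y +ᵥ (2 : ℝ)⁻¹ • B) := (measure_biUnion_finset₀ hdisj.aedisjoint hmeas).symm
    _ = μ (s + (2 : ℝ)⁻¹ • B) := by rw [← Finset.set_biUnion_coe, Set.iUnion_vadd_set]; rfl

lemma Nat.cast_le_of_mul_le_ofReal_mul {n : ℕ} {a : ℝ≥0∞} (ha₀ : a ≠ 0) (ha : a ≠ ⊤) {r : ℝ}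
    (hr : 0 ≤ r) (h : n * a ≤ ENNReal.ofReal r * a) : (n : ℝ) ≤ r := by
  rw [ENNReal.mul_le_mul_iff_left ha₀ ha, ← ENNReal.ofReal_natCast] at h
  exact (ENNReal.ofReal_le_ofReal_iff hr).mp h

lemma card_le_of_addHaar_add_half_smul_le {E : Type*} [NormedAddCommGroup E]
    [NormedSpace ℝ E] [MeasurableSpace E] [BorelSpace E] [FiniteDimensional ℝ E] (μ : Measure E)
    [μ.IsAddHaarMeasure] {B C : Set E} (hB : Convex ℝ B) (hsymm : -B = B) (hB₀ : μ B ≠ 0)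
    (hBtop : μ B ≠ ⊤) {r : ℝ} (hr : 0 ≤ r)
    (hμ : μ (C + (2 : ℝ)⁻¹ • B) ≤ ENNReal.ofReal (r * 2⁻¹ ^ Module.finrank ℝ E) * μ B)
    {s : Finset E} (hsC : (s : Set E) ⊆ C) (hs : (s : Set E).Pairwise fun y y' => y - y' ∉ B) :
    (s.card : ℝ) ≤ r := by
  have hhalf : μ ((2 : ℝ)⁻¹ • B) = ENNReal.ofReal (2⁻¹ ^ Module.finrank ℝ E) * μ B := by
    rw [Measure.addHaar_smul, abs_of_pos (by positivity)]
  refine Nat.cast_le_of_mul_le_ofReal_mul (a := μ ((2 : ℝ)⁻¹ • B)) ?_ ?_ hr ?_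
  · rw [hhalf]
    exact mul_ne_zero (by simp) hB₀
  · rw [hhalf]
    exact ENNReal.mul_ne_top ENNReal.ofReal_ne_top hBtop
  calc s.card * μ ((2 : ℝ)⁻¹ • B) = μ (s + (2 : ℝ)⁻¹ • B) :=
        card_mul_addHaar_half_smul_eq μ hB hsymm hs
    _ ≤ μ (C + (2 : ℝ)⁻¹ • B) := measure_mono (Set.add_subset_add_right hsC)
    _ ≤ ENNReal.ofReal (r * 2⁻¹ ^ Module.finrank ℝ E) * μ B := hμ
    _ = ENNReal.ofReal r * μ ((2 : ℝ)⁻¹ • B) := by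
        rw [hhalf, ← mul_assoc, ← ENNReal.ofReal_mul hr]

theorem stmt_3_general (d : ℕ) (B C : Set (EuclideanSpace ℝ (Fin d)))
    (hCcpt : IsCompact C) (hBconv : Convex ℝ B) (hBsymm : B = -B)
    (V : ℝ≥0∞) (hV : 0 < V) (hCV : volume C = V) (hBV : volume B = V)
    (c : ℝ) (hc : 1 ≤ c)
    (hvol : ∀ t₁ t₂ : ℝ, 0 < t₁ → 0 < t₂ →
      volume (t₁ • C + t₂ • B) ≤ ENNReal.ofReal (c ^ d * (t₁ + t₂) ^ d) * V) :
    ∃ Y : Set (EuclideanSpace ℝ (Fin d)), Y ⊆ intLattice d ∧ Y.Finite ∧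
      (Y.ncard : ℝ) ≤ (3 * c) ^ d ∧
      C ∩ intLattice d ⊆ Y + (B ∩ intLattice d) := by
  classical
  have hB₀ : volume B ≠ 0 := hBV ▸ hV.ne'
  have hBtop : volume B ≠ ⊤ := hBV ▸ hCV ▸ hCcpt.measure_lt_top.ne
  obtain ⟨Y, hYS, hYsep, hYcov⟩ := hCcpt.isBounded.finite_inter_intLattice.toFinset
    |>.exists_separated_subset_covering
      (hBconv.zero_mem_of_neg_eq hBsymm.symm (nonempty_of_measure_ne_zero hB₀)) hBsymm.symm
  simp only [Set.Finite.subset_toFinset, Set.Finite.mem_toFinset] at hYS hYcov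
  refine ⟨Y, fun y hy => (hYS hy).2, Y.finite_toSet, ?_, fun x hx => ?_⟩
  · rw [Set.ncard_coe_finset]
    refine card_le_of_addHaar_add_half_smul_le volume hBconv hBsymm.symm hB₀ hBtop
      (pow_nonneg (by linarith) d) ?_ (fun y hy => (hYS hy).1) hYsep
    calc volume (C + (2 : ℝ)⁻¹ • B) = volume ((1 : ℝ) • C + (2 : ℝ)⁻¹ • B) := by rw [one_smul]
      _ ≤ ENNReal.ofReal (c ^ d * (1 + 2⁻¹) ^ d) * V := hvol 1 2⁻¹ one_pos (by norm_num)
      _ = ENNReal.ofReal ((3 * c) ^ d * 2⁻¹ ^ Module.finrank ℝ (EuclideanSpace ℝ (Fin d))) *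
          volume B := by
          rw [hBV, finrank_euclideanSpace_fin, ← mul_pow, ← mul_pow]
          congr 3
          ring
  · obtain ⟨y, hy, hxy⟩ := hYcov x hx
    exact ⟨y, hy, x - y, ⟨hxy, sub_mem_intLattice hx.2 (hYS hy).2⟩, add_sub_cancel y x⟩

theorem stmt_3 (d : ℕ) (B C : Set (EuclideanSpace ℝ (Fin d)))
    (hCcpt : IsCompact C) (hCconv : Convex ℝ C) (hCint : (interior C).Nonempty)
    (hBcpt : IsCompact B) (hBconv : Convex ℝ B) (hBint : (interior B).Nonempty)
    (hBsymm : B = -B)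
    (V : ℝ≥0∞) (hV : 0 < V) (hCV : volume C = V) (hBV : volume B = V)
    (c : ℝ) (hc : 1 ≤ c)
    (hvol : ∀ t₁ t₂ : ℝ, 0 < t₁ → 0 < t₂ →
      volume (t₁ • C + t₂ • B) ≤ ENNReal.ofReal (c ^ d * (t₁ + t₂) ^ d) * V) :
    ∃ Y : Set (EuclideanSpace ℝ (Fin d)), Y ⊆ intLattice d ∧ Y.Finite ∧
      (Y.ncard : ℝ) ≤ (3 * c) ^ d ∧
      C ∩ intLattice d ⊆ Y + (B ∩ intLattice d) :=
  stmt_3_general d B C hCcpt hBconv hBsymm V hV hCV hBV c hc hvol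
end

section
/- Let B, C ⊆ ℝ^d be centrally symmetric convex bodies of equal volume V > 0 such that vol(t₁·C + t₂·B) ≤ c^d (t₁ + t₂)^d V for all t₁, t₂ > 0, where c ≥ 1. Then there exist finite sets Y, Z ⊆ ℤ^d with |Y|, |Z| ≤ (3c)^d such that C ∩ ℤ^d ⊆ Y + (B ∩ ℤ^d) and B ∩ ℤ^d ⊆ Z + (C ∩ ℤ^d). -/
/-!
Ruzsa's covering argument. Choose a maximal set `Y` of lattice points of `C` whose pairwise
differences avoid `B`; by maximality every lattice point of `C` lies in `Y + (B ∩ ℤ^d)`. By convexity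
and symmetry of `B` the translates `y + B/2`, `y ∈ Y`, are pairwise disjoint, and they lie in
`C + B/2`, so `|Y| · 2⁻ᵈ V ≤ vol(C + B/2) ≤ c^d (3/2)^d V`. Swapping `B` and `C` gives `Z`.
-/

open MeasureTheory
open scoped Pointwise ENNReal

open Set Bornology

theorem intLattice_eq_span (d : ℕ) :
    intLattice d = Submodule.span ℤ (range (EuclideanSpace.basisFun (Fin d) ℝ).toBasis) := by
  ext x
  rw [SetLike.mem_coe, Module.Basis.mem_span_iff_repr_mem]
  simp [intLattice, eq_comm]

theorem Set.Finite.exists_separated_covering_subset {G : Type*} [AddGroup G] {S D : Set G} (hS : S.Finite)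
    (hD0 : 0 ∈ D) (hD : D = -D) :
    ∃ T ⊆ S, T.Pairwise (fun x y ↦ x - y ∉ D) ∧ ∀ z ∈ S, ∃ y ∈ T, z - y ∈ D := by
  obtain ⟨T, ⟨hTS, hTsep⟩, hTmax⟩ :=
    (hS.finite_subsets.subset fun T (hT : T ⊆ S ∧ _) ↦ hT.1).exists_maximal
      (s := {T | T ⊆ S ∧ T.Pairwise fun x y ↦ x - y ∉ D}) ⟨∅, empty_subset _, pairwise_empty _⟩
  refine ⟨T, hTS, hTsep, fun z hz ↦ ?_⟩
  by_contra! hfar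
  have hzT : z ∉ T := fun hzT ↦ hfar z hzT (by simpa using hD0)
  have hins : insert z T ⊆ S ∧ (insert z T).Pairwise fun x y ↦ x - y ∉ D := by
    refine ⟨insert_subset hz hTS, pairwise_insert.2 ⟨hTsep, fun y hy _ ↦ ⟨hfar y hy, ?_⟩⟩⟩
    rw [hD, ← neg_sub, neg_mem_neg]
    exact hfar y hy
  exact hzT (hTmax hins (subset_insert z T) (mem_insert z T))

theorem Set.Finite.ncard_mul_measure_le_measure_add {G : Type*} [MeasurableSpace G] [AddGroup G]
    [MeasurableAdd G] {μ : Measure G} [μ.IsAddLeftInvariant] {A s T : Set G} (hT : T.Finite)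
    (hTA : T ⊆ A) (hs : MeasurableSet s) (hdisj : T.PairwiseDisjoint (· +ᵥ s)) :
    T.ncard * μ s ≤ μ (A + s) := by
  lift T to Finset G using hT
  calc ((T : Set G).ncard : ℝ≥0∞) * μ s = ∑ y ∈ T, μ (y +ᵥ s) := by
        simp [ncard_coe_finset, measure_vadd]
    _ = μ (⋃ y ∈ T, y +ᵥ s) := (measure_biUnion_finset hdisj fun y _ ↦ hs.const_vadd y).symm
    _ ≤ μ (A + s) := measure_mono <| iUnion₂_subset fun y hy ↦ vadd_set_subset_add (hTA hy)

theorem Convex.disjoint_vadd_half_smul_of_sub_notMem {E : Type*} [AddCommGroup E] [Module ℝ E]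
    {B : Set E} (hB : Convex ℝ B) (hBsymm : B = -B) {x y : E} (hxy : x - y ∉ B) :
    Disjoint (x +ᵥ (2⁻¹ : ℝ) • B) (y +ᵥ (2⁻¹ : ℝ) • B) := by
  rw [disjoint_left]
  rintro _ ⟨_, ⟨b, hb, rfl⟩, rfl⟩ ⟨_, ⟨b', hb', rfl⟩, heq⟩
  refine hxy ?_
  have hdiff : x - y = (2⁻¹ : ℝ) • b' + (2⁻¹ : ℝ) • -b := by
    simp only [vadd_eq_add] at heq
    rw [smul_neg, ← sub_eq_add_neg, sub_eq_sub_iff_add_eq_add, ← heq, add_comm]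
  rw [hdiff]
  exact hB hb' (by rw [hBsymm]; simpa using hb) (by norm_num) (by norm_num) (by norm_num)

theorem Convex.zero_mem_of_eq_neg {E : Type*} [AddCommGroup E] [Module ℝ E] {B : Set E}
    (hB : Convex ℝ B) (hBsymm : B = -B) (hne : B.Nonempty) : (0 : E) ∈ B := by
  obtain ⟨x, hx⟩ := hne
  have hnx : -x ∈ B := by rw [hBsymm]; simpa using hx
  simpa using hB.midpoint_mem hx hnx

theorem ruzsa_covering_addSubgroup_inter {E : Type*} [AddCommGroup E] [Module ℝ E]
    [MeasurableSpace E] [MeasurableAdd E] [MeasurableConstSMul ℝ E] {μ : Measure E}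
    [μ.IsAddLeftInvariant] (L : AddSubgroup E) {B C : Set E} (hCL : (C ∩ L).Finite)
    (hBm : MeasurableSet B) (hBconv : Convex ℝ B) (hBsymm : B = -B) (hB0 : 0 ∈ B) :
    ∃ Y ⊆ C ∩ L, Y.Finite ∧ Y.ncard * μ ((2⁻¹ : ℝ) • B) ≤ μ (C + (2⁻¹ : ℝ) • B) ∧
      C ∩ L ⊆ Y + (B ∩ L) := by
  obtain ⟨Y, hYCL, hYsep, hcover⟩ := hCL.exists_separated_covering_subset hB0 hBsymm
  refine ⟨Y, hYCL, hCL.subset hYCL,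
    (hCL.subset hYCL).ncard_mul_measure_le_measure_add (hYCL.trans inter_subset_left)
      (hBm.const_smul_of_ne_zero (by norm_num)) fun x hx y hy hxy ↦
        hBconv.disjoint_vadd_half_smul_of_sub_notMem hBsymm (hYsep hx hy hxy),
    fun z hz ↦ ?_⟩
  obtain ⟨y, hy, hzy⟩ := hcover z hz
  exact ⟨y, hy, z - y, ⟨hzy, L.sub_mem hz.2 (hYCL hy).2⟩, add_sub_cancel y z⟩

theorem exists_intLattice_covering {d : ℕ} {B C : Set (EuclideanSpace ℝ (Fin d))}
    (hC : IsBounded C) (hBcpt : IsCompact B) (hBconv : Convex ℝ B) (hBsymm : B = -B)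
    {V : ℝ≥0∞} (hV : 0 < V) (hBV : volume B = V) {c : ℝ} (hc : 0 ≤ c)
    (hCB : volume (C + (2⁻¹ : ℝ) • B) ≤ ENNReal.ofReal (c ^ d * (1 + 2⁻¹) ^ d) * V) :
    ∃ Y ⊆ intLattice d, Y.Finite ∧ (Y.ncard : ℝ) ≤ (3 * c) ^ d ∧
      C ∩ intLattice d ⊆ Y + (B ∩ intLattice d) := by
  have hB0 : (0 : EuclideanSpace ℝ (Fin d)) ∈ B :=
    hBconv.zero_mem_of_eq_neg hBsymm (nonempty_of_measure_ne_zero (hBV ▸ hV.ne'))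
  have hVtop : V ≠ ∞ := hBV ▸ hBcpt.measure_lt_top.ne
  have hhalf : volume ((2⁻¹ : ℝ) • B) = ENNReal.ofReal (2⁻¹ ^ d) * V := by
    rw [Measure.addHaar_smul, finrank_euclideanSpace_fin, hBV, abs_of_nonneg (by positivity)]
  rw [intLattice_eq_span]
  obtain ⟨Y, hYCL, hYfin, hYvol, hcover⟩ :=
    ruzsa_covering_addSubgroup_inter (μ := volume)
      (Submodule.span ℤ (range (EuclideanSpace.basisFun (Fin d) ℝ).toBasis)).toAddSubgroup
      (ZSpan.setFinite_inter _ hC) hBcpt.isClosed.measurableSet hBconv hBsymm hB0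
  refine ⟨Y, hYCL.trans inter_subset_right, hYfin, ?_, hcover⟩
  have hmul : (Y.ncard : ℝ≥0∞) * (ENNReal.ofReal (2⁻¹ ^ d) * V) ≤
      ENNReal.ofReal ((3 * c) ^ d) * (ENNReal.ofReal (2⁻¹ ^ d) * V) :=
    calc (Y.ncard : ℝ≥0∞) * (ENNReal.ofReal (2⁻¹ ^ d) * V) ≤ volume (C + (2⁻¹ : ℝ) • B) :=
          hhalf ▸ hYvol
      _ ≤ ENNReal.ofReal (c ^ d * (1 + 2⁻¹) ^ d) * V := hCB
      _ = ENNReal.ofReal ((3 * c) ^ d) * (ENNReal.ofReal (2⁻¹ ^ d) * V) := by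
          rw [← mul_assoc, ← ENNReal.ofReal_mul (by positivity), ← mul_pow, ← mul_pow]
          ring_nf
  rw [ENNReal.mul_le_mul_iff_left (mul_ne_zero (by simp) hV.ne')
    (ENNReal.mul_ne_top ENNReal.ofReal_ne_top hVtop)] at hmul
  rwa [← ENNReal.ofReal_natCast, ENNReal.ofReal_le_ofReal_iff (by positivity)] at hmul

theorem stmt_4_general (d : ℕ) (B C : Set (EuclideanSpace ℝ (Fin d)))
    (hCcpt : IsCompact C) (hCconv : Convex ℝ C)
    (hCsymm : C = -C)
    (hBcpt : IsCompact B) (hBconv : Convex ℝ B)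
    (hBsymm : B = -B)
    (V : ℝ≥0∞) (hV : 0 < V) (hCV : volume C = V) (hBV : volume B = V)
    (c : ℝ) (hc : 1 ≤ c)
    (hvol : ∀ t₁ t₂ : ℝ, 0 < t₁ → 0 < t₂ →
      volume (t₁ • C + t₂ • B) ≤ ENNReal.ofReal (c ^ d * (t₁ + t₂) ^ d) * V) :
    ∃ Y Z : Set (EuclideanSpace ℝ (Fin d)),
      Y ⊆ intLattice d ∧ Z ⊆ intLattice d ∧ Y.Finite ∧ Z.Finite ∧
      (Y.ncard : ℝ) ≤ (3 * c) ^ d ∧ (Z.ncard : ℝ) ≤ (3 * c) ^ d ∧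
      C ∩ intLattice d ⊆ Y + (B ∩ intLattice d) ∧
      B ∩ intLattice d ⊆ Z + (C ∩ intLattice d) := by
  have hCB := hvol 1 2⁻¹ one_pos (by norm_num)
  have hBC := hvol 2⁻¹ 1 (by norm_num) one_pos
  rw [one_smul] at hCB
  rw [one_smul, add_comm (_ • C), add_comm (2⁻¹ : ℝ)] at hBC
  obtain ⟨Y, hYL, hYfin, hYcard, hYcover⟩ := exists_intLattice_covering hCcpt.isBounded hBcpt
    hBconv hBsymm hV hBV (by linarith) hCB
  obtain ⟨Z, hZL, hZfin, hZcard, hZcover⟩ := exists_intLattice_covering hBcpt.isBounded hCcpt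
    hCconv hCsymm hV hCV (by linarith) hBC
  exact ⟨Y, Z, hYL, hZL, hYfin, hZfin, hYcard, hZcard, hYcover, hZcover⟩

theorem stmt_4 (d : ℕ) (B C : Set (EuclideanSpace ℝ (Fin d)))
    (hCcpt : IsCompact C) (hCconv : Convex ℝ C) (hCint : (interior C).Nonempty)
    (hCsymm : C = -C)
    (hBcpt : IsCompact B) (hBconv : Convex ℝ B) (hBint : (interior B).Nonempty)
    (hBsymm : B = -B)
    (V : ℝ≥0∞) (hV : 0 < V) (hCV : volume C = V) (hBV : volume B = V)
    (c : ℝ) (hc : 1 ≤ c)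
    (hvol : ∀ t₁ t₂ : ℝ, 0 < t₁ → 0 < t₂ →
      volume (t₁ • C + t₂ • B) ≤ ENNReal.ofReal (c ^ d * (t₁ + t₂) ^ d) * V) :
    ∃ Y Z : Set (EuclideanSpace ℝ (Fin d)),
      Y ⊆ intLattice d ∧ Z ⊆ intLattice d ∧ Y.Finite ∧ Z.Finite ∧
      (Y.ncard : ℝ) ≤ (3 * c) ^ d ∧ (Z.ncard : ℝ) ≤ (3 * c) ^ d ∧
      C ∩ intLattice d ⊆ Y + (B ∩ intLattice d) ∧
      B ∩ intLattice d ⊆ Z + (C ∩ intLattice d) :=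
  stmt_4_general d B C hCcpt hCconv hCsymm hBcpt hBconv hBsymm V hV hCV hBV c hc hvol
end

section
/- If the convex-progression formulation of the polynomial Freĭman–Ruzsa conjecture holds, and Milman's reverse Brunn–Minkowski inequality holds, then the ellipsoid formulation of the polynomial Freĭman–Ruzsa conjecture holds: for G = ℤ^m or ℝ^m and finite A ⊆ G with |A+A| ≤ K|A|, there exist d ≤ C log(2K), a₀,…,a_d ∈ G, γ ∈ GL_d(ℝ), and X ⊆ G with |X| ≤ C K^C and |{n ∈ ℤ^d : ‖γ(n)‖₂ ≤ 1}| ≤ C K^C |A|, such that A ⊆ X + {a₀ + n₁a₁ + ⋯ + n_d a_d : n ∈ ℤ^d, ‖γ(n)‖₂ ≤ 1}, where C is an absolute constant. -/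
open MeasureTheory
open scoped Pointwise ENNReal

/-- Embedding of `ℤ^d` into the Euclidean space `ℝ^d`. -/
def intEmb (d : ℕ) (n : Fin d → ℤ) : EuclideanSpace ℝ (Fin d) :=
  WithLp.toLp 2 (fun i => (n i : ℝ))

/-- The convex-progression formulation of the polynomial Freĭman–Ruzsa
conjecture for a group `G`, with constant `C`. -/
def ConvexPFR (C : ℝ) (G : Type) [AddCommGroup G] : Prop :=
  ∀ (K : ℝ) (A : Set G), 1 ≤ K → A.Finite → A.Nonempty →
    ((A + A).ncard : ℝ) ≤ K * A.ncard →
    ∃ (d : ℕ) (B : Set (EuclideanSpace ℝ (Fin d))) (a₀ : G) (a : Fin d → G)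
      (X : Set G),
      (d : ℝ) ≤ C * Real.log (2 * K) ∧
      IsCompact B ∧ Convex ℝ B ∧ (interior B).Nonempty ∧ B = -B ∧
      {n : Fin d → ℤ | intEmb d n ∈ B}.Finite ∧
      ({n : Fin d → ℤ | intEmb d n ∈ B}.ncard : ℝ) ≤ C * K ^ C * A.ncard ∧
      X.Finite ∧ (X.ncard : ℝ) ≤ C * K ^ C ∧
      A ⊆ X + (fun n : Fin d → ℤ => a₀ + ∑ i, n i • a i) ''
        {n | intEmb d n ∈ B}

/-- The ellipsoid formulation of the polynomial Freĭman–Ruzsa conjecture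
for a group `G`, with constant `C`. -/
def EllipsoidPFR (C : ℝ) (G : Type) [AddCommGroup G] : Prop :=
  ∀ (K : ℝ) (A : Set G), 1 ≤ K → A.Finite → A.Nonempty →
    ((A + A).ncard : ℝ) ≤ K * A.ncard →
    ∃ (d : ℕ) (γ : Matrix (Fin d) (Fin d) ℝ) (a₀ : G) (a : Fin d → G)
      (X : Set G),
      (d : ℝ) ≤ C * Real.log (2 * K) ∧ IsUnit γ.det ∧
      {n : Fin d → ℤ | Real.sqrt (∑ i, (γ.mulVec (fun j => (n j : ℝ)) i) ^ 2) ≤ 1}.Finite ∧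
      ({n : Fin d → ℤ |
          Real.sqrt (∑ i, (γ.mulVec (fun j => (n j : ℝ)) i) ^ 2) ≤ 1}.ncard : ℝ) ≤
        C * K ^ C * A.ncard ∧
      X.Finite ∧ (X.ncard : ℝ) ≤ C * K ^ C ∧
      A ⊆ X + (fun n : Fin d → ℤ => a₀ + ∑ i, n i • a i) ''
        {n | Real.sqrt (∑ i, (γ.mulVec (fun j => (n j : ℝ)) i) ^ 2) ≤ 1}

/-- Milman's reverse Brunn–Minkowski inequality with constant `c`. -/
def MilmanRBM (c : ℝ) : Prop :=
  ∀ (d : ℕ), 0 < d → ∀ B₁ B₂ : Set (EuclideanSpace ℝ (Fin d)),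
    IsCompact B₁ → Convex ℝ B₁ → (interior B₁).Nonempty →
    IsCompact B₂ → Convex ℝ B₂ → (interior B₂).Nonempty →
    ∃ γ₁ γ₂ : Matrix.SpecialLinearGroup (Fin d) ℝ,
      ∀ t₁ t₂ : ℝ, 0 < t₁ → 0 < t₂ →
        volume (t₁ • (Matrix.toEuclideanLin (γ₁ : Matrix (Fin d) (Fin d) ℝ) '' B₁) +
            t₂ • (Matrix.toEuclideanLin (γ₂ : Matrix (Fin d) (Fin d) ℝ) '' B₂)) ^
            ((1 : ℝ) / d) ≤
          ENNReal.ofReal c *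
            (ENNReal.ofReal t₁ * volume B₁ ^ ((1 : ℝ) / d) +
             ENNReal.ofReal t₂ * volume B₂ ^ ((1 : ℝ) / d))


/-!
Let `B` be the symmetric convex body provided by the convex-progression formulation and
`P = B ∩ ℤ^d`. Milman's inequality for `B` and the unit ball yields an ellipsoid `E` with
`vol E = vol B` and `vol (t B + s E) ≤ (c (t + s))^d vol B`. Lattice points are turned into volume
by packing: the translates `n + K/2`, `n ∈ S ∩ ℤ^d`, lie in `S + K/2` and overlap at most
`|K ∩ ℤ^d|` times, so `|S ∩ ℤ^d| vol (K/2) ≤ |K ∩ ℤ^d| vol (S + K/2)`. This gives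
`|2E ∩ ℤ^d| ≤ (5c)^d |P|` and `|(B + E) ∩ ℤ^d| ≤ (5c)^d |E ∩ ℤ^d|`, and the latter, through Ruzsa's
covering lemma, covers `P` by `(5c)^d` translates of `(E - E) ∩ ℤ^d = 2E ∩ ℤ^d`. As
`d ≤ C log (2K)`, the factor `(5c)^d` is polynomial in `K`.
-/

open Filter Metric Set
open scoped Finset

section LatticePointCount

variable {L E : Type*} [AddCommGroup L] [AddCommGroup E]

open scoped Classical in
theorem card_filter_mem_vadd_le (f : L →+ E) {C D : Set E} (hDC : D - D ⊆ C)
    (hC : (f ⁻¹' C).Finite) (I : Finset L) (x : E) :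
    #{n ∈ I | x ∈ f n +ᵥ D} ≤ (f ⁻¹' C).ncard := by
  obtain hI | ⟨n₀, hn₀⟩ := (I.filter (x ∈ f · +ᵥ D)).eq_empty_or_nonempty
  · simp only [hI, Finset.card_empty, zero_le]
  rw [ncard_eq_toFinset_card _ hC]
  refine Finset.card_le_card_of_injOn (· - n₀) (fun n hn ↦ ?_)
    (fun _ _ _ _ h ↦ sub_left_injective h)
  simp only [Finset.coe_filter, Finset.mem_filter, mem_vadd_set, vadd_eq_add] at hn hn₀
  obtain ⟨-, y, hy, hxy⟩ := hn
  obtain ⟨-, y₀, hy₀, hxy₀⟩ := hn₀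
  have : f (n - n₀) = y₀ - y := by rw [map_sub]; linear_combination (norm := abel) hxy - hxy₀
  simpa [this] using hDC (sub_mem_sub hy₀ hy)

theorem ncard_preimage_mul_measure_le [MeasurableSpace E] [MeasurableAdd E] (μ : Measure E)
    [μ.IsAddLeftInvariant] (f : L →+ E) (S : Set E) {C D : Set E} (hD : MeasurableSet D)
    (hDC : D - D ⊆ C) (hC : (f ⁻¹' C).Finite) :
    ((f ⁻¹' S).ncard : ℝ≥0∞) * μ D ≤ (f ⁻¹' C).ncard * μ (S + D) := by
  classical
  obtain hS | hS := (f ⁻¹' S).infinite_or_finite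
  · simp [hS.ncard]
  have hsum (x : E) : ∑ n ∈ hS.toFinset, (f n +ᵥ D).indicator (1 : E → ℝ≥0∞) x ≤
      (S + D).indicator (fun _ ↦ ((f ⁻¹' C).ncard : ℝ≥0∞)) x := by
    by_cases hx : x ∈ S + D
    · simp only [indicator_of_mem hx, indicator_apply, Pi.one_apply, Finset.sum_boole]
      exact_mod_cast card_filter_mem_vadd_le f hDC hC _ x
    · rw [indicator_of_notMem hx]
      refine (Finset.sum_eq_zero fun n hn ↦ indicator_of_notMem ?_ (1 : E → ℝ≥0∞)).le
      rintro ⟨y, hy, rfl⟩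
      exact hx (add_mem_add (hS.mem_toFinset.1 hn) hy)
  calc ((f ⁻¹' S).ncard : ℝ≥0∞) * μ D = ∑ n ∈ hS.toFinset, μ (f n +ᵥ D) := by
        simp [measure_vadd, ncard_eq_toFinset_card _ hS]
    _ = ∫⁻ x, ∑ n ∈ hS.toFinset, (f n +ᵥ D).indicator (1 : E → ℝ≥0∞) x ∂μ := by
        rw [lintegral_finsetSum _ fun n _ ↦ measurable_one.indicator (hD.const_vadd _)]
        simp [lintegral_indicator_one (hD.const_vadd _)]
    _ ≤ ∫⁻ x, (S + D).indicator (fun _ ↦ ((f ⁻¹' C).ncard : ℝ≥0∞)) x ∂μ := lintegral_mono hsum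
    _ ≤ _ := lintegral_indicator_const_le _ _

end LatticePointCount

section Lattice

variable {d : ℕ}

def intEmbHom (d : ℕ) : (Fin d → ℤ) →+ EuclideanSpace ℝ (Fin d) where
  toFun := intEmb d
  map_zero' := by ext; simp [intEmb]
  map_add' _ _ := by ext; simp [intEmb]

@[simp]
theorem coe_intEmbHom : ⇑(intEmbHom d) = intEmb d := rfl

theorem tendsto_intEmb_cofinite_cocompact : Tendsto (intEmb d) cofinite (cocompact _) := by
  have h : Tendsto (fun n : Fin d → ℤ ↦ ((↑) : ℤ → ℝ) ∘ n) cofinite (cocompact _) := by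
    convert! Tendsto.pi_map_coprodᵢ fun _ ↦ Int.tendsto_coe_cofinite
    · rw [coprodᵢ_cofinite]
    · rw [coprodᵢ_cocompact]
  exact (PiLp.homeomorph 2 fun _ : Fin d ↦ ℝ).symm.isClosedEmbedding.tendsto_cocompact.comp h

theorem IsCompact.finite_preimage_intEmb {K : Set (EuclideanSpace ℝ (Fin d))} (hK : IsCompact K) :
    (intEmb d ⁻¹' K).Finite :=
  tendsto_cofinite_cocompact_iff.1 tendsto_intEmb_cofinite_cocompact K hK

end Lattice

section ConvexBody

variable {d : ℕ} {K : Set (EuclideanSpace ℝ (Fin d))}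

structure IsSymmetricConvexBody (K : Set (EuclideanSpace ℝ (Fin d))) : Prop where
  isCompact : IsCompact K
  convex : Convex ℝ K
  interior_nonempty : (interior K).Nonempty
  eq_neg : K = -K

theorem volume_half_smul (K : Set (EuclideanSpace ℝ (Fin d))) :
    volume ((2⁻¹ : ℝ) • K) = ENNReal.ofReal (2⁻¹ ^ d) * volume K := by
  rw [Measure.addHaar_smul, finrank_euclideanSpace_fin, abs_of_nonneg (by positivity)]

namespace IsSymmetricConvexBody

theorem volume_ne_zero (hK : IsSymmetricConvexBody K) : volume K ≠ 0 :=
  ((isOpen_interior.measure_pos volume hK.interior_nonempty).trans_le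
    (measure_mono interior_subset)).ne'

theorem half_smul_sub_half_smul_subset (hK : IsSymmetricConvexBody K) :
    (2⁻¹ : ℝ) • K - (2⁻¹ : ℝ) • K ⊆ K := by
  rw [sub_eq_add_neg, ← smul_set_neg, ← hK.eq_neg,
    ← hK.convex.add_smul (by norm_num) (by norm_num)]
  norm_num

theorem zero_mem (hK : IsSymmetricConvexBody K) : 0 ∈ K := by
  obtain ⟨x, hx⟩ := hK.interior_nonempty
  have hx' := smul_mem_smul_set (a := (2⁻¹ : ℝ)) (interior_subset hx)
  exact hK.half_smul_sub_half_smul_subset ⟨_, hx', _, hx', sub_self _⟩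

theorem ncard_preimage_intEmb_le_of_volume_le (hK : IsSymmetricConvexBody K)
    (S : Set (EuclideanSpace ℝ (Fin d))) {a : ℝ} (ha : 0 ≤ a)
    (hvol : volume (S + (2⁻¹ : ℝ) • K) ≤ ENNReal.ofReal (a ^ d) * volume K) :
    ((intEmb d ⁻¹' S).ncard : ℝ) ≤ (2 * a) ^ d * (intEmb d ⁻¹' K).ncard := by
  have hcount := ncard_preimage_mul_measure_le volume (intEmbHom d) S
    (hK.isCompact.smul (2⁻¹ : ℝ)).measurableSet hK.half_smul_sub_half_smul_subset
    hK.isCompact.finite_preimage_intEmb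
  simp only [coe_intEmbHom] at hcount
  have hhalf_ne_zero : volume ((2⁻¹ : ℝ) • K) ≠ 0 := by
    rw [volume_half_smul]; exact mul_ne_zero (by simp) hK.volume_ne_zero
  have hhalf_ne_top : volume ((2⁻¹ : ℝ) • K) ≠ ⊤ := (hK.isCompact.smul _).measure_lt_top.ne
  have hscale :
      ENNReal.ofReal ((2 * a) ^ d) * ENNReal.ofReal (2⁻¹ ^ d) = ENNReal.ofReal (a ^ d) := by
    rw [← ENNReal.ofReal_mul (by positivity), ← mul_pow, mul_right_comm,
      mul_inv_cancel₀ two_ne_zero, one_mul]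
  rw [← ENNReal.ofReal_le_ofReal_iff (by positivity), ENNReal.ofReal_natCast,
    ← ENNReal.mul_le_mul_iff_left hhalf_ne_zero hhalf_ne_top]
  calc _ ≤ ((intEmb d ⁻¹' K).ncard : ℝ≥0∞) * volume (S + (2⁻¹ : ℝ) • K) := hcount
    _ ≤ ((intEmb d ⁻¹' K).ncard : ℝ≥0∞) * (ENNReal.ofReal (a ^ d) * volume K) := by gcongr
    _ = _ := by
      rw [volume_half_smul, ENNReal.ofReal_mul (by positivity), ENNReal.ofReal_natCast, ← hscale]
      ring

end IsSymmetricConvexBody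
end ConvexBody

section ReverseBrunnMinkowski

variable {d : ℕ} {c : ℝ} {B E : Set (EuclideanSpace ℝ (Fin d))}

structure ReverseBrunnMinkowskiPair (c : ℝ) (B E : Set (EuclideanSpace ℝ (Fin d))) : Prop where
  volume_eq : volume E = volume B
  volume_add_le : ∀ t s : ℝ, 0 < t → 0 < s →
    volume (t • B + s • E) ≤ ENNReal.ofReal ((c * (t + s)) ^ d) * volume B

namespace ReverseBrunnMinkowskiPair

theorem ncard_preimage_two_smul_le (hBE : ReverseBrunnMinkowskiPair c B E)
    (hB : IsSymmetricConvexBody B) (hc : 0 ≤ c) :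
    ((intEmb d ⁻¹' ((2 : ℝ) • E)).ncard : ℝ) ≤ (5 * c) ^ d * (intEmb d ⁻¹' B).ncard := by
  have hvol : volume ((2 : ℝ) • E + (2⁻¹ : ℝ) • B) ≤
      ENNReal.ofReal ((c * (2⁻¹ + 2)) ^ d) * volume B := by
    rw [add_comm]; exact hBE.volume_add_le _ _ (by norm_num) (by norm_num)
  convert hB.ncard_preimage_intEmb_le_of_volume_le _ (by positivity) hvol using 3
  ring

theorem ncard_preimage_add_le (hBE : ReverseBrunnMinkowskiPair c B E)
    (hE : IsSymmetricConvexBody E) (hc : 0 ≤ c) :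
    ((intEmb d ⁻¹' (B + E)).ncard : ℝ) ≤ (5 * c) ^ d * (intEmb d ⁻¹' E).ncard := by
  have hvol : volume (B + E + (2⁻¹ : ℝ) • E) ≤
      ENNReal.ofReal ((c * (1 + (1 + 2⁻¹))) ^ d) * volume E := by
    have hsum : B + E + (2⁻¹ : ℝ) • E = (1 : ℝ) • B + (1 + 2⁻¹ : ℝ) • E := by
      rw [hE.convex.add_smul zero_le_one (by norm_num), one_smul, one_smul, add_assoc]
    rw [hBE.volume_eq, hsum]
    exact hBE.volume_add_le _ _ one_pos (by norm_num)
  convert hE.ncard_preimage_intEmb_le_of_volume_le _ (by positivity) hvol using 3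
  ring

theorem exists_finite_cover (hBE : ReverseBrunnMinkowskiPair c B E)
    (hB : IsSymmetricConvexBody B) (hE : IsSymmetricConvexBody E) (hc : 0 ≤ c) :
    ∃ F : Set (Fin d → ℤ), F.Finite ∧ (F.ncard : ℝ) ≤ (5 * c) ^ d ∧
      intEmb d ⁻¹' B ⊆ F + intEmb d ⁻¹' ((2 : ℝ) • E) := by
  have hPE : intEmb d ⁻¹' B + intEmb d ⁻¹' E ⊆ intEmb d ⁻¹' (B + E) :=
    preimage_add_preimage_subset (intEmbHom d)
  have hK : (Nat.card ↥(intEmb d ⁻¹' B + intEmb d ⁻¹' E) : ℝ) ≤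
      (5 * c) ^ d * Nat.card ↥(intEmb d ⁻¹' E) := by
    simp only [Nat.card_coe_set_eq]
    refine le_trans ?_ (hBE.ncard_preimage_add_le hE hc)
    exact_mod_cast ncard_le_ncard hPE (hB.isCompact.add hE.isCompact).finite_preimage_intEmb
  obtain ⟨F, -, hF, hcover, hFfin⟩ := Set.ruzsa_covering_add
    hB.isCompact.finite_preimage_intEmb hE.isCompact.finite_preimage_intEmb
    ⟨0, by rw [mem_preimage, ← coe_intEmbHom, map_zero]; exact hE.zero_mem⟩ hK
  have hEE : E - E = (2 : ℝ) • E := by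
    rw [sub_eq_add_neg, ← hE.eq_neg, (by norm_num : (2 : ℝ) = 1 + 1),
      hE.convex.add_smul zero_le_one zero_le_one, one_smul]
  refine ⟨F, hFfin, by rwa [← Nat.card_coe_set_eq], hcover.trans (add_subset_add_left ?_)⟩
  rw [← hEE]
  exact preimage_sub_preimage_subset (intEmbHom d)

end ReverseBrunnMinkowskiPair

end ReverseBrunnMinkowski

section Ellipsoid

variable {d : ℕ}

def ellipsoid (γ : Matrix (Fin d) (Fin d) ℝ) : Set (EuclideanSpace ℝ (Fin d)) :=
  Matrix.toEuclideanLin γ ⁻¹' closedBall 0 1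

theorem preimage_intEmb_ellipsoid (γ : Matrix (Fin d) (Fin d) ℝ) :
    intEmb d ⁻¹' ellipsoid γ =
      {n | √(∑ i, (γ.mulVec (fun j ↦ (n j : ℝ)) i) ^ 2) ≤ 1} := by
  ext n
  simp [ellipsoid, intEmb, EuclideanSpace.norm_eq, Matrix.toLpLin_apply]

theorem smul_ellipsoid (γ : Matrix (Fin d) (Fin d) ℝ) {a : ℝ} (ha : a ≠ 0) :
    a • ellipsoid γ = ellipsoid (a⁻¹ • γ) := by
  ext x
  simp [mem_smul_set_iff_inv_smul_mem₀ ha, ellipsoid]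

theorem Matrix.toEuclideanLin_bijective {γ : Matrix (Fin d) (Fin d) ℝ} (hγ : IsUnit γ.det) :
    Function.Bijective (Matrix.toEuclideanLin γ) :=
  (Module.End.isUnit_iff _).1 <| (LinearMap.isUnit_iff_isUnit_det _).2 <| by
    rwa [LinearMap.det_toLpLin]

theorem isSymmetricConvexBody_ellipsoid {γ : Matrix (Fin d) (Fin d) ℝ} (hγ : IsUnit γ.det) :
    IsSymmetricConvexBody (ellipsoid γ) where
  isCompact :=
    ((LinearEquiv.ofBijective _ (Matrix.toEuclideanLin_bijective hγ)).toContinuousLinearEquiv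
      |>.toHomeomorph.isCompact_preimage).2 (isCompact_closedBall 0 1)
  convex := (convex_closedBall 0 1).linear_preimage _
  interior_nonempty := ⟨0, (isOpen_ball.preimage
    (Matrix.toEuclideanLin γ).continuous_of_finiteDimensional).subset_interior_iff.2
      (preimage_mono ball_subset_closedBall) (by simp)⟩
  eq_neg := by ext x; simp [ellipsoid]

theorem image_mul_ellipsoid (g : Matrix (Fin d) (Fin d) ℝ) {M : Matrix (Fin d) (Fin d) ℝ}
    (hM : IsUnit M.det) :
    Matrix.toEuclideanLin (g * M) '' ellipsoid M = Matrix.toEuclideanLin g '' closedBall 0 1 := by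
  rw [Matrix.toLpLin_mul_same, LinearMap.coe_comp, image_comp, ellipsoid,
    image_preimage_eq _ (Matrix.toEuclideanLin_bijective hM).surjective]

end Ellipsoid

theorem ENNReal.le_pow_mul_of_rpow_le_mul_rpow {X Y V : ℝ≥0∞} {d : ℕ} (hd : d ≠ 0)
    (h : X ^ ((1 : ℝ) / d) ≤ Y * V ^ ((1 : ℝ) / d)) : X ≤ Y ^ d * V := by
  rw [one_div] at h
  calc X = (X ^ (d⁻¹ : ℝ)) ^ d := (ENNReal.rpow_inv_natCast_pow hd X).symm
    _ ≤ (Y * V ^ (d⁻¹ : ℝ)) ^ d := pow_le_pow_left₀ (zero_le) h d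
    _ = Y ^ d * V := by rw [mul_pow, ENNReal.rpow_inv_natCast_pow hd]

theorem ENNReal.exists_ofReal_pow_mul_eq {d : ℕ} (hd : d ≠ 0) {v V : ℝ≥0∞} (hv₀ : v ≠ 0)
    (hv : v ≠ ⊤) (hV₀ : V ≠ 0) (hV : V ≠ ⊤) : ∃ ρ : ℝ, 0 < ρ ∧ ENNReal.ofReal ρ ^ d * v = V := by
  have hρ : (V / v) ^ (d⁻¹ : ℝ) ≠ ⊤ :=
    ENNReal.rpow_ne_top_of_nonneg (by positivity) (ENNReal.div_ne_top hV hv₀)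
  refine ⟨((V / v) ^ (d⁻¹ : ℝ)).toReal, ENNReal.toReal_pos ?_ hρ, ?_⟩
  · exact (ENNReal.rpow_pos (ENNReal.div_pos hV₀ hv) (ENNReal.div_ne_top hV hv₀)).ne'
  · rw [ENNReal.ofReal_toReal hρ, ENNReal.rpow_inv_natCast_pow hd, ENNReal.div_mul_cancel hv₀ hv]

section Milman

variable {d : ℕ} {c : ℝ}

theorem Matrix.SpecialLinearGroup.volume_image_toEuclideanLin
    (g : Matrix.SpecialLinearGroup (Fin d) ℝ) (X : Set (EuclideanSpace ℝ (Fin d))) :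
    volume (Matrix.toEuclideanLin (g : Matrix (Fin d) (Fin d) ℝ) '' X) = volume X := by
  simp [Measure.addHaar_image_linearMap]

theorem reverseBrunnMinkowskiPair_of_finZero {B E : Set (EuclideanSpace ℝ (Fin 0))}
    (hB : B.Nonempty) (hE : E.Nonempty) : ReverseBrunnMinkowskiPair c B E where
  volume_eq := by rw [hB.eq_univ, hE.eq_univ]
  volume_add_le _ _ _ _ := by simpa [hB.eq_univ] using measure_mono (subset_univ _)

theorem MilmanRBM.exists_ellipsoid (hMil : MilmanRBM c) (hc : 0 ≤ c)
    {B : Set (EuclideanSpace ℝ (Fin d))} (hB : IsSymmetricConvexBody B) :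
    ∃ γ : Matrix (Fin d) (Fin d) ℝ, IsUnit γ.det ∧ ReverseBrunnMinkowskiPair c B (ellipsoid γ) := by
  rcases Nat.eq_zero_or_pos d with rfl | hd
  · exact ⟨1, by simp, reverseBrunnMinkowskiPair_of_finZero ⟨0, hB.zero_mem⟩
      ⟨0, (isSymmetricConvexBody_ellipsoid (by simp)).zero_mem⟩⟩
  obtain ⟨γ₁, γ₂, hγ⟩ := hMil d hd B (closedBall 0 1) hB.isCompact hB.convex hB.interior_nonempty
    (isCompact_closedBall _ _) (convex_closedBall _ _)
    (by rw [interior_closedBall _ one_ne_zero]; exact nonempty_ball.2 one_pos)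
  set v := volume (closedBall (0 : EuclideanSpace ℝ (Fin d)) 1)
  have hv₀ : v ≠ 0 := (measure_closedBall_pos volume _ one_pos).ne'
  have hv : v ≠ ⊤ := measure_closedBall_lt_top.ne
  obtain ⟨ρ, hρ, hρv⟩ := ENNReal.exists_ofReal_pow_mul_eq hd.ne' hv₀ hv hB.volume_ne_zero
    hB.isCompact.measure_lt_top.ne
  set M : Matrix (Fin d) (Fin d) ℝ := ↑(γ₂⁻¹ * γ₁)
  have hM : M.det = 1 := Matrix.SpecialLinearGroup.det_coe _
  have hγ₁ : (γ₁ : Matrix (Fin d) (Fin d) ℝ) = γ₂ * M := by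
    simp [M, ← Matrix.SpecialLinearGroup.coe_mul]
  -- `γ₁` maps the ellipsoid onto `ρ • γ₂ '' closedBall 0 1`, transporting Milman's bound.
  have himage (s : ℝ) :
      Matrix.toEuclideanLin (γ₁ : Matrix (Fin d) (Fin d) ℝ) '' (s • ellipsoid (ρ⁻¹ • M)) =
        (s * ρ) • Matrix.toEuclideanLin (γ₂ : Matrix (Fin d) (Fin d) ℝ) '' closedBall 0 1 := by
    rw [← smul_ellipsoid M hρ.ne', smul_smul, image_smul_set, hγ₁,
      image_mul_ellipsoid _ (hM ▸ isUnit_one)]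
  have hρv' : ENNReal.ofReal ρ * v ^ ((1 : ℝ) / d) = volume B ^ ((1 : ℝ) / d) := by
    rw [← hρv, ENNReal.mul_rpow_of_nonneg _ _ (by positivity), one_div,
      ENNReal.pow_rpow_inv_natCast hd.ne']
  refine ⟨ρ⁻¹ • M, by simp [hM, hρ.ne'], ⟨?_, fun t s ht hs ↦ ?_⟩⟩
  · calc volume (ellipsoid (ρ⁻¹ • M))
        = volume (Matrix.toEuclideanLin (γ₁ : Matrix (Fin d) (Fin d) ℝ) ''
            ((1 : ℝ) • ellipsoid (ρ⁻¹ • M))) := by rw [one_smul, γ₁.volume_image_toEuclideanLin]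
      _ = volume B := by
        rw [himage, one_mul, Measure.addHaar_smul, γ₂.volume_image_toEuclideanLin,
          finrank_euclideanSpace_fin, abs_of_pos (by positivity), ENNReal.ofReal_pow hρ.le, hρv]
  · rw [← γ₁.volume_image_toEuclideanLin, Set.image_add, image_smul_set, himage,
      ENNReal.ofReal_pow (by positivity)]
    refine ENNReal.le_pow_mul_of_rpow_le_mul_rpow hd.ne'
      ((hγ t (s * ρ) ht (by positivity)).trans_eq ?_)
    rw [ENNReal.ofReal_mul hs.le, mul_assoc, hρv', ← add_mul, ← ENNReal.ofReal_add ht.le hs.le,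
      ← mul_assoc, ← ENNReal.ofReal_mul hc]

end Milman

theorem MilmanRBM.exists_ellipsoid_cover {d : ℕ} {c : ℝ} {B : Set (EuclideanSpace ℝ (Fin d))}
    (hMil : MilmanRBM c) (hc : 0 ≤ c) (hB : IsSymmetricConvexBody B) :
    ∃ (γ : Matrix (Fin d) (Fin d) ℝ) (F : Set (Fin d → ℤ)), IsUnit γ.det ∧
      ((intEmb d ⁻¹' ellipsoid γ).ncard : ℝ) ≤ (5 * c) ^ d * (intEmb d ⁻¹' B).ncard ∧
      F.Finite ∧ (F.ncard : ℝ) ≤ (5 * c) ^ d ∧ intEmb d ⁻¹' B ⊆ F + intEmb d ⁻¹' ellipsoid γ := by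
  obtain ⟨γ, hγ, hBE⟩ := hMil.exists_ellipsoid hc hB
  obtain ⟨F, hF, hFcard, hcover⟩ :=
    hBE.exists_finite_cover hB (isSymmetricConvexBody_ellipsoid hγ) hc
  have h2 : (2 : ℝ) • ellipsoid γ = ellipsoid ((2 : ℝ)⁻¹ • γ) := smul_ellipsoid γ two_ne_zero
  refine ⟨(2 : ℝ)⁻¹ • γ, F, ?_, h2 ▸ hBE.ncard_preimage_two_smul_le hB hc, hF, hFcard, h2 ▸ hcover⟩
  rw [Matrix.det_smul]
  exact (IsUnit.pow _ (by norm_num)).mul hγ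

-- Since `d ≤ C log (2K)`, the covering factor `(5c)^d` is at most `(2K)^(C log (5c))`.
noncomputable def ellipsoidPFRConst (C c : ℝ) : ℝ :=
  (C + C * Real.log (5 * c)) * 2 ^ (C * Real.log (5 * c))

section ellipsoidPFRConst

variable {C c : ℝ}

theorem le_ellipsoidPFRConst (hC : 0 ≤ C) (hc : 1 ≤ c) : C ≤ ellipsoidPFRConst C c := by
  have hN : 0 ≤ C * Real.log (5 * c) := mul_nonneg hC (Real.log_nonneg (by linarith))
  calc C ≤ C + C * Real.log (5 * c) := le_add_of_nonneg_right hN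
    _ ≤ _ := le_mul_of_one_le_right (by positivity) (Real.one_le_rpow one_le_two hN)

theorem five_mul_pow_mul_le_ellipsoidPFRConst (hC : 0 ≤ C) (hc : 1 ≤ c) {K : ℝ} (hK : 1 ≤ K)
    {d : ℕ} (hd : (d : ℝ) ≤ C * Real.log (2 * K)) :
    (5 * c) ^ d * (C * K ^ C) ≤ ellipsoidPFRConst C c * K ^ ellipsoidPFRConst C c := by
  set N := C * Real.log (5 * c) with hN_def
  have hN : 0 ≤ N := mul_nonneg hC (Real.log_nonneg (by linarith))
  have hpow : (5 * c) ^ d ≤ 2 ^ N * K ^ N :=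
    calc (5 * c) ^ d = (5 * c) ^ (d : ℝ) := (Real.rpow_natCast _ d).symm
      _ ≤ (5 * c) ^ (C * Real.log (2 * K)) := Real.rpow_le_rpow_of_exponent_le (by linarith) hd
      _ = (2 * K) ^ N := by
        rw [Real.rpow_def_of_pos (by linarith), Real.rpow_def_of_pos (by linarith), hN_def]
        ring_nf
      _ = 2 ^ N * K ^ N := Real.mul_rpow (by norm_num) (by linarith)
  calc (5 * c) ^ d * (C * K ^ C) ≤ 2 ^ N * K ^ N * (C * K ^ C) := by gcongr
    _ = (C * 2 ^ N) * K ^ (N + C) := by rw [Real.rpow_add (by linarith)]; ring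
    _ ≤ ellipsoidPFRConst C c * K ^ ellipsoidPFRConst C c := by
      have h2N : 1 ≤ (2 : ℝ) ^ N := Real.one_le_rpow one_le_two hN
      gcongr
      · exact hC.trans (le_ellipsoidPFRConst hC hc)
      · exact mul_le_mul_of_nonneg_right (le_add_of_nonneg_right hN) (by positivity)
      · rw [add_comm]; exact le_mul_of_one_le_right (by positivity) h2N

end ellipsoidPFRConst

theorem progression_image_add_subset {ι G : Type*} [Fintype ι] [AddCommGroup G]
    (a₀ : G) (a : ι → G) (F P : Set (ι → ℤ)) :
    (fun n ↦ a₀ + ∑ i, n i • a i) '' (F + P) ⊆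
      (fun n ↦ ∑ i, n i • a i) '' F + (fun n ↦ a₀ + ∑ i, n i • a i) '' P := by
  rintro _ ⟨_, ⟨f, hf, n, hn, rfl⟩, rfl⟩
  refine ⟨_, mem_image_of_mem _ hf, _, mem_image_of_mem _ hn, ?_⟩
  simp only [Pi.add_apply, add_smul, Finset.sum_add_distrib]
  abel

theorem ncard_add_image_le {α G : Type*} [AddCommGroup G] (X : Set G) (f : α → G) {F : Set α}
    (hF : F.Finite) : (X + f '' F).ncard ≤ X.ncard * F.ncard := by
  have hXF := Set.natCard_add_le (s := X) (t := f '' F)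
  simp only [Nat.card_coe_set_eq] at hXF
  exact hXF.trans (Nat.mul_le_mul_left _ (ncard_image_le hF))

theorem ConvexPFR.ellipsoidPFR {C c : ℝ} {G : Type} [AddCommGroup G] (hconv : ConvexPFR C G)
    (hMil : MilmanRBM c) (hC : 1 ≤ C) (hc : 1 ≤ c) : EllipsoidPFR (ellipsoidPFRConst C c) G := by
  intro K A hK hA hA₀ hAA
  have hC₀ : 0 ≤ C := zero_le_one.trans hC
  obtain ⟨d, B, a₀, a, X, hd, hBc, hBconv, hBint, hBsymm, -, hBcard, hX, hXcard, hAX⟩ :=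
    hconv K A hK hA hA₀ hAA
  obtain ⟨γ, F, hγ, hEcard, hF, hFcard, hBF⟩ :=
    hMil.exists_ellipsoid_cover (zero_le_one.trans hc) ⟨hBc, hBconv, hBint, hBsymm⟩
  have hconst := five_mul_pow_mul_le_ellipsoidPFRConst hC₀ hc hK hd
  set ψ : (Fin d → ℤ) → G := fun n ↦ ∑ i, n i • a i
  simp only [← preimage_intEmb_ellipsoid]
  refine ⟨d, γ, a₀, a, X + ψ '' F, ?_, hγ,
    (isSymmetricConvexBody_ellipsoid hγ).isCompact.finite_preimage_intEmb, ?_, hX.add (hF.image ψ),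
    ?_, ?_⟩
  · exact hd.trans (mul_le_mul_of_nonneg_right (le_ellipsoidPFRConst hC₀ hc)
      (Real.log_nonneg (by linarith)))
  · calc ((intEmb d ⁻¹' ellipsoid γ).ncard : ℝ) ≤ (5 * c) ^ d * (C * K ^ C * A.ncard) :=
          hEcard.trans (by gcongr; exact hBcard)
      _ ≤ ellipsoidPFRConst C c * K ^ ellipsoidPFRConst C c * A.ncard := by
          rw [← mul_assoc]; gcongr
  · calc ((X + ψ '' F).ncard : ℝ) ≤ X.ncard * F.ncard := by
          exact_mod_cast ncard_add_image_le X ψ hF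
      _ ≤ C * K ^ C * (5 * c) ^ d := by gcongr
      _ ≤ _ := by rw [mul_comm]; exact hconst
  · calc A ⊆ X + (fun n ↦ a₀ + ∑ i, n i • a i) '' (intEmb d ⁻¹' B) := hAX
      _ ⊆ X + (fun n ↦ a₀ + ∑ i, n i • a i) '' (F + intEmb d ⁻¹' ellipsoid γ) := by gcongr
      _ ⊆ X + (ψ '' F + (fun n ↦ a₀ + ∑ i, n i • a i) '' (intEmb d ⁻¹' ellipsoid γ)) := by
          gcongr; exact progression_image_add_subset a₀ a F _
      _ = _ := (add_assoc _ _ _).symm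

theorem stmt_13
    (hconv : ∃ C : ℝ, 1 ≤ C ∧ (∀ m : ℕ, ConvexPFR C (Fin m → ℝ)) ∧
      (∀ m : ℕ, ConvexPFR C (Fin m → ℤ)))
    (hMilman : ∃ c : ℝ, 1 ≤ c ∧ MilmanRBM c) :
    ∃ C : ℝ, 1 ≤ C ∧ (∀ m : ℕ, EllipsoidPFR C (Fin m → ℝ)) ∧
      (∀ m : ℕ, EllipsoidPFR C (Fin m → ℤ)) := by
  obtain ⟨C, hC, hconvℝ, hconvℤ⟩ := hconv
  obtain ⟨c, hc, hMil⟩ := hMilman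
  exact ⟨ellipsoidPFRConst C c, hC.trans (le_ellipsoidPFRConst (zero_le_one.trans hC) hc),
    fun m ↦ (hconvℝ m).ellipsoidPFR hMil hC hc, fun m ↦ (hconvℤ m).ellipsoidPFR hMil hC hc⟩
end
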